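/- Let r be odd, G an r-graph, T a spanning tree of G, l a leaf of T. Let K be a copy of the complete graph K_r on new vertices l_1,…,l_r, and let G' be obtained from G − l and K by joining each vertex of K to one neighbor of l in G (so that each edge at l is replaced by an edge to a distinct K-vertex, counted with multiplicity). Then G' is r-regular and is an r-graph. -/

import Mathlib

/-!
Split a vertex set `S` of the expanded graph into its old part `X ⊆ V ∖ {l}` and its part `A` of
the new clique `K_r`; the clique edges alone contribute `|A| (r - |A|)` to the cut of `S`.
If `|A|` is even then `A ≠ K_r` (as `r` is odd) and `X` is odd in `G`; if `|A|` is odd then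
`X ∪ {l}` is odd in `G`. The cut of that set in `G` differs from the cut of `S` only in the edges
at `l`, now routed through `K_r`, and the at most `|A|` (resp. `r - |A|`) of them that `S` loses
are paid for by the clique edges.
-/

open Finset

structure Multigraph (V : Type) where
  mult : Sym2 V → ℕ
  loopless : ∀ v : V, mult s(v, v) = 0

namespace Multigraph

variable {V : Type} [Fintype V] [DecidableEq V]

def degree (G : Multigraph V) (v : V) : ℕ := ∑ u, G.mult s(v, u)

def IsRegular (G : Multigraph V) (r : ℕ) : Prop := ∀ v, G.degree v = r

def cutsize (G : Multigraph V) (S : Finset V) : ℕ :=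
  ∑ x ∈ S, ∑ y ∈ Sᶜ, G.mult s(x, y)

def IsRGraph (G : Multigraph V) (r : ℕ) : Prop :=
  G.IsRegular r ∧ ∀ S : Finset V, Odd S.card → r ≤ G.cutsize S

def reduce (G : Multigraph V) (S : Finset V) {u v : V} (huv : u ≠ v) :
    Multigraph {x : V // x ∉ S} where
  mult p := G.mult (p.map Subtype.val) + (if p.map Subtype.val = s(u, v) then 1 else 0)
  loopless a := by
    simp only [Sym2.map_pair_eq, G.loopless]
    rw [if_neg (fun h => by
      rcases Sym2.eq_iff.mp h with ⟨rfl, rfl⟩ | ⟨rfl, rfl⟩ <;> exact huv rfl)]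

def IsPerfectMatching (G : Multigraph V) (M : Sym2 V → ℕ) : Prop :=
  (∀ p, M p ≤ G.mult p) ∧ ∀ v, ∑ u, M s(v, u) = 1

def degIn (T : Sym2 V → ℕ) (v : V) : ℕ := ∑ u, T s(v, u)

def IsSpanningTree (G : Multigraph V) (T : Sym2 V → ℕ) : Prop :=
  (∀ p, T p ≤ G.mult p) ∧ (∑ p : Sym2 V, T p) + 1 = Fintype.card V ∧
    ∀ u v : V, Relation.ReflTransGen (fun a b => T s(a, b) ≠ 0) u v

end Multigraph

open Multigraph

variable {V : Type} [Fintype V] [DecidableEq V]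

/-- The leaf-expansion of `G` at a vertex `l`: delete `l`, add a copy of the
complete graph `K_r` on new vertices `Sum.inr 0, …, Sum.inr (r-1)`, and join the
`i`-th new vertex to the former neighbour `φ i` of `l` (the function `φ`
enumerates the edge-ends at `l`, with multiplicity). -/
def Multigraph.leafExpand (G : Multigraph V) (r : ℕ) (l : V) (φ : Fin r → V)
    (hφ : ∀ i, φ i ≠ l) : Multigraph ({x : V // x ≠ l} ⊕ Fin r) where
  mult := Sym2.lift ⟨fun a b =>
    match a, b with
    | Sum.inl a, Sum.inl b => G.mult s(a.1, b.1)
    | Sum.inl a, Sum.inr i => if φ i = a.1 then 1 else 0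
    | Sum.inr i, Sum.inl a => if φ i = a.1 then 1 else 0
    | Sum.inr i, Sum.inr j => if i = j then 0 else 1,
    by
      intro a b
      rcases a with a | i <;> rcases b with b | j <;> simp only []
      · rw [Sym2.eq_swap]
      · simp [eq_comm]⟩
  loopless w := by
    rcases w with a | i <;> simp [G.loopless]

namespace Finset

variable {ι α : Type*}

lemma sum_sum_ite_eq_card_filter [DecidableEq α] (s : Finset ι) (X : Finset α) (f : ι → α) :
    ∑ i ∈ s, ∑ x ∈ X, (if f i = x then 1 else 0) = #(s.filter (f · ∈ X)) := by
  simp only [sum_ite_eq, sum_boole, Nat.cast_id]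

variable [Fintype ι] [DecidableEq ι] {A : Finset ι} (p : ι → Prop) [DecidablePred p]

lemma card_filter_le_of_ne_univ (hA : A ≠ univ) :
    #(univ.filter p) ≤ #(Aᶜ.filter p) + #(A.filter (¬p ·)) + #A * #Aᶜ := by
  have hsplit : #(univ.filter p) = #(A.filter p) + #(Aᶜ.filter p) := by
    rw [← card_union_of_disjoint (disjoint_filter_filter disjoint_compl_right), ← filter_union,
      union_compl]
  have hAc : Aᶜ.Nonempty := (compl_ne_univ_iff_nonempty Aᶜ).1 (by rwa [compl_compl])
  have hA' : #A ≤ #A * #Aᶜ := Nat.le_mul_of_pos_right _ (card_pos.2 hAc)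
  have := card_filter_le A p
  omega

lemma card_filter_not_le_of_nonempty (hA : A.Nonempty) :
    #(univ.filter (¬p ·)) ≤ #(Aᶜ.filter p) + #(A.filter (¬p ·)) + #A * #Aᶜ := by
  have := card_filter_le_of_ne_univ (A := Aᶜ) (¬p ·) ((compl_ne_univ_iff_nonempty A).2 hA)
  simpa [add_comm, mul_comm] using this

end Finset

namespace Multigraph

variable (G : Multigraph V) {l : V}

omit [Fintype V] in
lemma sum_mult_eq_card_filter {ι : Type*} [Fintype ι] {φ : ι → V}
    (hφ : ∀ x : V, (univ.filter fun i => φ i = x).card = G.mult s(l, x)) (Y : Finset V) :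
    ∑ y ∈ Y, G.mult s(l, y) = #(univ.filter (φ · ∈ Y)) := by
  rw [← sum_sum_ite_eq_card_filter, sum_comm]
  exact sum_congr rfl fun y _ => by rw [← hφ, card_filter]

lemma cutsize_eq_of_notMem {X : Finset V} (hl : l ∉ X) :
    G.cutsize X = ∑ x ∈ X, ∑ y ∈ (insert l X)ᶜ, G.mult s(x, y) + ∑ x ∈ X, G.mult s(l, x) := by
  rw [cutsize, ← sum_add_distrib, compl_insert]
  refine sum_congr rfl fun x _ => ?_
  rw [Sym2.eq_swap, sum_erase_add _ _ (mem_compl.2 hl)]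

lemma cutsize_insert {X : Finset V} (hl : l ∉ X) :
    G.cutsize (insert l X) =
      ∑ x ∈ X, ∑ y ∈ (insert l X)ᶜ, G.mult s(x, y) + ∑ y ∈ (insert l X)ᶜ, G.mult s(l, y) := by
  rw [cutsize, sum_insert hl, add_comm]

section leafExpand

variable {r : ℕ} (φ : Fin r → V) (hφl : ∀ i, φ i ≠ l)

section

omit [Fintype V]

@[simp]
lemma leafExpand_mult_inl_inl (a b : {x : V // x ≠ l}) :
    (G.leafExpand r l φ hφl).mult s(.inl a, .inl b) = G.mult s(a.1, b.1) := rfl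

@[simp]
lemma leafExpand_mult_inl_inr (a : {x : V // x ≠ l}) (i : Fin r) :
    (G.leafExpand r l φ hφl).mult s(.inl a, .inr i) = if φ i = a.1 then 1 else 0 := rfl

@[simp]
lemma leafExpand_mult_inr_inl (i : Fin r) (a : {x : V // x ≠ l}) :
    (G.leafExpand r l φ hφl).mult s(.inr i, .inl a) = if φ i = a.1 then 1 else 0 := rfl

@[simp]
lemma leafExpand_mult_inr_inr (i j : Fin r) :
    (G.leafExpand r l φ hφl).mult s(.inr i, .inr j) = if i = j then 0 else 1 := rfl

end

lemma leafExpand_isRegular (hG : G.IsRegular r)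
    (hφ : ∀ x : V, (univ.filter fun i => φ i = x).card = G.mult s(l, x)) :
    (G.leafExpand r l φ hφl).IsRegular r := by
  rintro (a | i) <;> rw [degree, Fintype.sum_sum_type]
  · simp only [leafExpand_mult_inl_inl, leafExpand_mult_inl_inr, sum_boole, Nat.cast_id]
    rw [hφ, Sym2.eq_swap (a := l), ← hG a, degree, Fintype.sum_eq_add_sum_subtype_ne _ l,
      add_comm]
  · simp only [leafExpand_mult_inr_inl, leafExpand_mult_inr_inr]
    have hclique : ∑ j, (if i = j then 0 else 1) = r - 1 := by
      simp [sum_ite, filter_ne]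
    have hφi : ∑ b : {x : V // x ≠ l}, (if φ i = b.1 then 1 else 0) = 1 := by
      have := Fintype.sum_eq_add_sum_subtype_ne (fun x => if φ i = x then 1 else 0) l
      simp only [if_neg (hφl i), zero_add, sum_ite_eq, mem_univ, if_true] at this
      exact this.symm
    have := i.pos
    omega

lemma leafExpand_cutsize_disjSum (B : Finset {x : V // x ≠ l}) (A : Finset (Fin r))
    {X : Finset V} (hX : B.map (Function.Embedding.subtype _) = X) :
    (G.leafExpand r l φ hφl).cutsize (B.disjSum A) =
      ∑ x ∈ X, ∑ y ∈ (insert l X)ᶜ, G.mult s(x, y) + #(Aᶜ.filter (φ · ∈ X)) +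
        #(A.filter (φ · ∉ X)) + #A * #Aᶜ := by
  have hB (f : V → ℕ) : ∑ b ∈ B, f b = ∑ x ∈ X, f x := by rw [← hX, sum_map]; rfl
  have hBc (f : V → ℕ) : ∑ b ∈ Bᶜ, f b = ∑ y ∈ (insert l X)ᶜ, f y := by
    have : Bᶜ.map (Function.Embedding.subtype _) = (insert l X)ᶜ := by
      subst hX; ext y; by_cases y = l <;> simp_all
    rw [← this, sum_map]; rfl
  have hAAc : ∑ i ∈ A, ∑ j ∈ Aᶜ, (if i = j then 0 else 1) = #A * #Aᶜ := by
    rw [sum_congr rfl fun i hi => sum_congr rfl fun j hj =>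
      if_neg (ne_of_mem_of_not_mem hi (mem_compl.1 hj))]
    simp
  have hBAc : ∑ b ∈ B, ∑ j ∈ Aᶜ, (if φ j = b.1 then 1 else 0) = #(Aᶜ.filter (φ · ∈ X)) :=
    (hB _).trans (sum_comm.trans (sum_sum_ite_eq_card_filter _ _ _))
  have hABc : ∑ i ∈ A, ∑ b ∈ Bᶜ, (if φ i = b.1 then 1 else 0) = #(A.filter (φ · ∉ X)) := by
    rw [sum_congr rfl fun i _ => hBc fun y => if φ i = y then 1 else 0,
      sum_sum_ite_eq_card_filter]
    exact congrArg card (filter_congr fun i _ => by simp [hφl i])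
  have hBBc : ∑ b ∈ B, ∑ b' ∈ Bᶜ, G.mult s(b.1, b'.1) =
      ∑ x ∈ X, ∑ y ∈ (insert l X)ᶜ, G.mult s(x, y) := by
    rw [← hB]
    exact sum_congr rfl fun b _ => hBc fun y => G.mult s(b.1, y)
  rw [cutsize, show (B.disjSum A)ᶜ = Bᶜ.disjSum Aᶜ by ext (x | x) <;> simp]
  simp only [sum_disjSum, leafExpand_mult_inl_inl, leafExpand_mult_inl_inr,
    leafExpand_mult_inr_inl, leafExpand_mult_inr_inr, sum_add_distrib, hAAc, hBAc, hABc, hBBc]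
  ring

lemma le_leafExpand_cutsize (hodd : Odd r) (hG : G.IsRGraph r)
    (hφ : ∀ x : V, (univ.filter fun i => φ i = x).card = G.mult s(l, x))
    {S : Finset ({x : V // x ≠ l} ⊕ Fin r)} (hS : Odd #S) :
    r ≤ (G.leafExpand r l φ hφl).cutsize S := by
  obtain ⟨B, A, rfl⟩ : ∃ (B : Finset _) (A : Finset _), S = B.disjSum A :=
    ⟨_, _, toLeft_disjSum_toRight.symm⟩
  set X := B.map (Function.Embedding.subtype _) with hX
  have hlX : l ∉ X := by simp [X]
  have hcard : #X + #A = #(B.disjSum A) := by rw [card_map, card_disjSum]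
  rw [leafExpand_cutsize_disjSum G φ hφl _ _ hX.symm]
  rcases Nat.even_or_odd #A with hA | hA
  · have hAu : A ≠ univ := by
      rintro hA'
      rw [hA', card_univ, Fintype.card_fin] at hA
      exact Nat.not_even_iff_odd.2 hodd hA
    have hXodd : Odd #X := by
      rw [← hcard] at hS
      exact (Nat.odd_add.1 hS).2 hA
    have hcut := hG.2 X hXodd
    rw [G.cutsize_eq_of_notMem hlX, sum_mult_eq_card_filter G hφ] at hcut
    have := card_filter_le_of_ne_univ (φ · ∈ X) hAu
    omega
  · have hXodd : Odd #(insert l X) := by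
      rw [← hcard] at hS
      rw [card_insert_of_notMem hlX]
      exact ((Nat.odd_add'.1 hS).1 hA).add_one
    have hcut := hG.2 _ hXodd
    have hφX : univ.filter (φ · ∈ (insert l X)ᶜ) = univ.filter (φ · ∉ X) :=
      filter_congr fun i _ => by simp [hφl i]
    rw [G.cutsize_insert hlX, sum_mult_eq_card_filter G hφ, hφX] at hcut
    have := card_filter_not_le_of_nonempty (φ · ∈ X) (card_pos.1 hA.pos)
    omega

end leafExpand

end Multigraph

theorem leaf_expansion_is_r_graph_general {V : Type} [Fintype V] [DecidableEq V]
    (r : ℕ) (hodd : Odd r) (G : Multigraph V) (hG : G.IsRGraph r)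
    (l : V)
    (φ : Fin r → V) (hφ : ∀ x : V, (Finset.univ.filter fun i => φ i = x).card = G.mult s(l, x))
    (hφl : ∀ i, φ i ≠ l) :
    (G.leafExpand r l φ hφl).IsRegular r ∧ (G.leafExpand r l φ hφl).IsRGraph r := by
  have hreg := G.leafExpand_isRegular φ hφl hG.1 hφ
  exact ⟨hreg, hreg, fun _ hS => G.le_leafExpand_cutsize φ hφl hodd hG hφ hS⟩

/-- **Leaf-expansion.**  Let `r` be odd, `G` an `r`-graph with spanning tree `T`,
and `l` a leaf of `T`.  Replace `l` by a copy of `K_r`, joining each new vertex to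
one former neighbour of `l` (one per edge at `l`, counted with multiplicity, as
recorded by `φ`).  The resulting graph `G'` is `r`-regular and is an `r`-graph. -/
theorem leaf_expansion_is_r_graph {V : Type} [Fintype V] [DecidableEq V]
    (r : ℕ) (hodd : Odd r) (G : Multigraph V) (hG : G.IsRGraph r)
    (T : Sym2 V → ℕ) (hT : G.IsSpanningTree T) (l : V) (hleaf : degIn T l = 1)
    (φ : Fin r → V) (hφ : ∀ x : V, (Finset.univ.filter fun i => φ i = x).card = G.mult s(l, x))
    (hφl : ∀ i, φ i ≠ l) :
    (G.leafExpand r l φ hφl).IsRegular r ∧ (G.leafExpand r l φ hφl).IsRGraph r :=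
  leaf_expansion_is_r_graph_general r hodd G hG l φ hφ hφl
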